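/- If H : X' → X is a fibrewise map admitting a right fibrewise homotopy inverse (H' : X → X' with H∘H' ≃_B id_X), then D_B(f_1∘H,...,f_r∘H) = D_B(f_1,...,f_r) for fibrewise maps f_1,...,f_r : X → Y over B. -/

import Mathlib

open Set

/-- Two continuous maps are fibrewise homotopic over `B`: there is a homotopy
whose every time-slice commutes with the projections to `B`. -/
def FibHomotopic {B X Y : Type*} [TopologicalSpace B] [TopologicalSpace X] [TopologicalSpace Y]
    (pX : X → B) (pY : Y → B) (f g : C(X, Y)) : Prop :=
  ∃ H : f.Homotopy g, ∀ (x : X) (t : unitInterval), pY (H (t, x)) = pX x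

/-- Sequential parametrized homotopic distance of a family of fibrewise maps:
the least `n` such that `X` admits an open cover by `n + 1` open sets on each of
which all the maps are pairwise fibrewise homotopic (`∞` if none exists). -/
noncomputable def fibDist {B X Y ι : Type*} [TopologicalSpace B] [TopologicalSpace X]
    [TopologicalSpace Y] (pX : X → B) (pY : Y → B) (f : ι → C(X, Y)) : ℕ∞ :=
  sInf {n : ℕ∞ | ∃ k : ℕ, (k : ℕ∞) = n ∧ ∃ U : Fin (k + 1) → Set X,
    (∀ i, IsOpen (U i)) ∧ (⋃ i, U i) = Set.univ ∧
    ∀ i s t, FibHomotopic (fun x : U i => pX (x : X)) pY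
      ((f s).restrict (U i)) ((f t).restrict (U i))}

/-!
Covers pull back along any fibrewise map, so precomposition never increases `D_B`. Conversely,
precomposing the maps `f i ∘ H` with `H'` yields `f i ∘ (H ∘ H')`, which is fibrewise homotopic
to `f i`, and `D_B` only depends on the fibrewise homotopy classes of the maps.
-/

namespace FibHomotopic

variable {B X Y Z : Type*} [TopologicalSpace B] [TopologicalSpace X] [TopologicalSpace Y]
  [TopologicalSpace Z] {pX : X → B} {pY : Y → B} {pZ : Z → B}

theorem symm {f g : C(X, Y)} (h : FibHomotopic pX pY f g) : FibHomotopic pX pY g f := by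
  obtain ⟨K, hK⟩ := h
  exact ⟨K.symm, fun x t => hK x _⟩

theorem trans {f g k : C(X, Y)} (hfg : FibHomotopic pX pY f g) (hgk : FibHomotopic pX pY g k) :
    FibHomotopic pX pY f k := by
  obtain ⟨K, hK⟩ := hfg
  obtain ⟨L, hL⟩ := hgk
  refine ⟨K.trans L, fun x t => ?_⟩
  rw [ContinuousMap.Homotopy.trans_apply]
  split_ifs
  · exact hK x _
  · exact hL x _

theorem comp_continuousMap {f g : C(X, Y)} (h : FibHomotopic pX pY f g) (φ : C(Z, X))
    (hφ : ∀ z, pX (φ z) = pZ z) : FibHomotopic pZ pY (f.comp φ) (g.comp φ) := by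
  obtain ⟨K, hK⟩ := h
  exact ⟨K.compContinuousMap φ, fun z t => (hK (φ z) t).trans (hφ z)⟩

theorem continuousMap_comp (g : C(Y, Z)) (hg : ∀ y, pZ (g y) = pY y) {f₀ f₁ : C(X, Y)}
    (h : FibHomotopic pX pY f₀ f₁) : FibHomotopic pX pZ (g.comp f₀) (g.comp f₁) := by
  obtain ⟨K, hK⟩ := h
  exact ⟨(ContinuousMap.Homotopy.refl g).comp K, fun x t => (hg _).trans (hK x t)⟩

theorem restrict {f g : C(X, Y)} (h : FibHomotopic pX pY f g) (U : Set X) :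
    FibHomotopic (fun x : U => pX x) pY (f.restrict U) (g.restrict U) :=
  h.comp_continuousMap ⟨Subtype.val, continuous_subtype_val⟩ fun _ => rfl

end FibHomotopic

section fibDist

variable {B X X' Y ι : Type*} [TopologicalSpace B] [TopologicalSpace X] [TopologicalSpace X']
  [TopologicalSpace Y] {pX : X → B} {pX' : X' → B} {pY : Y → B}

theorem fibDist_comp_le (f : ι → C(X, Y)) (H : C(X', X)) (hH : ∀ x, pX (H x) = pX' x) :
    fibDist pX' pY (fun i => (f i).comp H) ≤ fibDist pX pY f := by
  refine sInf_le_sInf ?_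
  rintro n ⟨k, hk, U, hU_open, hU_cover, hU_hom⟩
  refine ⟨k, hk, fun j => H ⁻¹' U j, fun j => (hU_open j).preimage H.continuous, ?_,
    fun j s t => ?_⟩
  · rw [← preimage_iUnion, hU_cover, preimage_univ]
  · exact (hU_hom j s t).comp_continuousMap (H.restrictPreimage (U j)) fun x => hH x

theorem fibDist_le_of_fibHomotopic {f g : ι → C(X, Y)}
    (hfg : ∀ i, FibHomotopic pX pY (f i) (g i)) : fibDist pX pY f ≤ fibDist pX pY g := by
  refine sInf_le_sInf ?_
  rintro n ⟨k, hk, U, hU_open, hU_cover, hU_hom⟩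
  exact ⟨k, hk, U, hU_open, hU_cover, fun j s t =>
    (((hfg s).restrict (U j)).trans (hU_hom j s t)).trans ((hfg t).restrict (U j)).symm⟩

theorem fibDist_congr {f g : ι → C(X, Y)} (hfg : ∀ i, FibHomotopic pX pY (f i) (g i)) :
    fibDist pX pY f = fibDist pX pY g :=
  le_antisymm (fibDist_le_of_fibHomotopic hfg) (fibDist_le_of_fibHomotopic fun i => (hfg i).symm)

end fibDist

theorem stmt11_general {B X X' Y : Type*} [TopologicalSpace B] [TopologicalSpace X] [TopologicalSpace X']
    [TopologicalSpace Y] (pX : X → B) (pX' : X' → B) (pY : Y → B)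
    (r : ℕ) (f : Fin r → C(X, Y)) (hf : ∀ i x, pY (f i x) = pX x)
    (H : C(X', X)) (hH : ∀ x, pX (H x) = pX' x)
    (H' : C(X, X')) (hH' : ∀ x, pX' (H' x) = pX x)
    (hinv : FibHomotopic pX pX (H.comp H') (ContinuousMap.id X)) :
    fibDist pX' pY (fun i => (f i).comp H) = fibDist pX pY f := by
  refine le_antisymm (fibDist_comp_le f H hH) ?_
  calc fibDist pX pY f = fibDist pX pY (fun i => (f i).comp (H.comp H')) :=
        fibDist_congr fun i => (FibHomotopic.continuousMap_comp (f i) (hf i) hinv).symm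
    _ ≤ fibDist pX' pY (fun i => (f i).comp H) := fibDist_comp_le _ H' hH'

/-- Precomposition with a fibrewise map admitting a right fibrewise homotopy inverse
preserves the sequential parametrized homotopic distance. -/
theorem stmt11 {B X X' Y : Type*} [TopologicalSpace B] [TopologicalSpace X] [TopologicalSpace X']
    [TopologicalSpace Y] (pX : X → B) (pX' : X' → B) (pY : Y → B)
    (hpX : Continuous pX) (hpX' : Continuous pX') (hpY : Continuous pY)
    (r : ℕ) (f : Fin r → C(X, Y)) (hf : ∀ i x, pY (f i x) = pX x)
    (H : C(X', X)) (hH : ∀ x, pX (H x) = pX' x)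
    (H' : C(X, X')) (hH' : ∀ x, pX' (H' x) = pX x)
    (hinv : FibHomotopic pX pX (H.comp H') (ContinuousMap.id X)) :
    fibDist pX' pY (fun i => (f i).comp H) = fibDist pX pY f :=
  stmt11_general pX pX' pY r f hf H hH H' hH' hinv
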